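/- arXiv:1212.3506 — 6 statements merged into one kernel-verified Lean document; each statement's English description precedes it below -/
import Mathlib

section
/- Let p ∈ ℝ[t,x₁,…,xₙ] be homogeneous of degree d with p(1,0,…,0)=1, and suppose p is hyperbolic, i.e. for every u ∈ ℝⁿ the univariate polynomial t ↦ p(t,u) has all roots real. Then for any linear form ℓ ∈ ℝ[x₁,…,xₙ] and any s ≥ 0, the polynomial T_s^ℓ(p) = p + s·ℓ·(∂p/∂t) is also hyperbolic. -/
/-- Restriction of `p ∈ ℝ[t,x₁,…,xₙ]` to the line through `(t, u)`:
the univariate polynomial `t ↦ p(t,u)`. Variable `0` is `t`. -/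
noncomputable def univRestrict (n : ℕ) (p : MvPolynomial (Fin (n + 1)) ℝ)
    (u : Fin n → ℝ) : Polynomial ℝ :=
  MvPolynomial.aeval
    (fun i : Fin (n + 1) =>
      Fin.cases (Polynomial.X : Polynomial ℝ) (fun j => Polynomial.C (u j)) i) p

/-- All complex roots of a real univariate polynomial are real. -/
def RealRooted (q : Polynomial ℝ) : Prop :=
  ∀ z : ℂ, Polynomial.aeval z q = 0 → z.im = 0

/-- `p` is hyperbolic with respect to the direction `(1,0,…,0)`. -/
def Hyperbolic (n : ℕ) (p : MvPolynomial (Fin (n + 1)) ℝ) : Prop :=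
  ∀ u : Fin n → ℝ, RealRooted (univRestrict n p u)

/-!
On the line through `u`, `T_s^ℓ(p)` restricts to `q + λ q'` with `q = p(·, u)` and
`λ = s ℓ(u)`. If `z ∉ ℝ` were a root of `q + λ q'` for a real-rooted `q`, then `q(z) ≠ 0` and the
logarithmic derivative gives `1 + λ ∑ᵢ 1 / (z - rᵢ) = 0` over the real roots `rᵢ` of `q`. Every
`Im (1 / (z - rᵢ))` has the sign of `-Im z`, so the imaginary part forces `λ = 0`, and then `1 = 0`.
-/

open Polynomial

lemma Complex.mul_im_one_div_sub_neg_of_im_eq_zero {z r : ℂ} (hr : r.im = 0) (hz : z.im ≠ 0) :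
    z.im * (1 / (z - r)).im < 0 := by
  have hzr : z - r ≠ 0 := fun h => hz (by simpa [hr] using congrArg Complex.im h)
  rw [one_div, Complex.inv_im, Complex.sub_im, hr, sub_zero, mul_div_assoc', mul_neg,
    neg_div, neg_lt_zero]
  exact div_pos (mul_self_pos.mpr hz) (Complex.normSq_pos.mpr hzr)

lemma Complex.im_sum_one_div_sub_ne_zero {m : Multiset ℂ} (hm : m ≠ 0)
    (hreal : ∀ r ∈ m, r.im = 0) {z : ℂ} (hz : z.im ≠ 0) :
    (m.map fun r => 1 / (z - r)).sum.im ≠ 0 := by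
  have him : (m.map fun r => 1 / (z - r)).sum.im = (m.map fun r => (1 / (z - r)).im).sum := by
    simpa [Multiset.map_map] using
      map_multiset_sum Complex.imAddGroupHom (m.map fun r => 1 / (z - r))
  have hneg : (m.map fun r => z.im * (1 / (z - r)).im).sum < (m.map fun _ => (0 : ℝ)).sum :=
    Multiset.sum_lt_sum_of_nonempty hm fun r hr =>
      Complex.mul_im_one_div_sub_neg_of_im_eq_zero (hreal r hr) hz
  rw [Multiset.sum_map_mul_left, ← him, Multiset.map_const', Multiset.sum_replicate,
    smul_zero] at hneg
  intro h
  rw [h, mul_zero] at hneg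
  exact lt_irrefl 0 hneg

lemma RealRooted.add_C_mul_derivative {q : ℝ[X]} (hq : RealRooted q) (a : ℝ) :
    RealRooted (q + C a * derivative q) := by
  intro z hz
  by_contra him
  set Q : ℂ[X] := q.map (algebraMap ℝ ℂ)
  have hQz : Q.eval z ≠ 0 := fun h => him (hq z (by rwa [← eval_map_algebraMap]))
  have hreal : ∀ r ∈ Q.roots, r.im = 0 := fun r hr =>
    hq r (by rw [← eval_map_algebraMap]; exact isRoot_of_mem_roots hr)
  set S := (Q.roots.map fun r => 1 / (z - r)).sum
  have hlog : Q.eval z * (1 + a * S) = 0 := by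
    have hroot : Q.eval z + a * (derivative Q).eval z = 0 := by
      rw [derivative_map, eval_map_algebraMap, eval_map_algebraMap]
      simpa using hz
    rw [(IsAlgClosed.splits Q).eval_derivative_eq_eval_mul_sum hQz] at hroot
    linear_combination hroot
  have hS : 1 + a * S = 0 := (mul_eq_zero.mp hlog).resolve_left hQz
  have ha : a ≠ 0 := by rintro rfl; simp at hS
  have hroots : Q.roots ≠ 0 := by intro h; simp [S, h] at hS
  have hSim : a * S.im = 0 := by simpa using congrArg Complex.im hS
  exact Complex.im_sum_one_div_sub_ne_zero hroots hreal him
    ((mul_eq_zero.mp hSim).resolve_left ha)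

lemma univRestrict_pderiv_zero (n : ℕ) (p : MvPolynomial (Fin (n + 1)) ℝ) (u : Fin n → ℝ) :
    univRestrict n (MvPolynomial.pderiv 0 p) u = derivative (univRestrict n p u) := by
  induction p using MvPolynomial.induction_on with
  | C a => simp [univRestrict]
  | add f g hf hg => simp only [univRestrict, map_add] at *; rw [hf, hg]
  | mul_X f i hf =>
    simp only [univRestrict] at *
    cases i using Fin.cases with
    | zero => simp [hf, derivative_mul, mul_comm]
    | succ j => simp [hf, derivative_mul, MvPolynomial.pderiv_X, mul_comm]

lemma univRestrict_add_C_mul_linearForm_mul_pderiv_zero (n : ℕ)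
    (p : MvPolynomial (Fin (n + 1)) ℝ) (c : Fin n → ℝ) (s : ℝ) (u : Fin n → ℝ) :
    univRestrict n (p + MvPolynomial.C s *
        (∑ i : Fin n, MvPolynomial.C (c i) * MvPolynomial.X i.succ) *
        MvPolynomial.pderiv 0 p) u
      = univRestrict n p u + C (s * ∑ i, c i * u i) * derivative (univRestrict n p u) := by
  rw [← univRestrict_pderiv_zero]
  simp only [univRestrict, map_add, map_mul, map_sum, MvPolynomial.aeval_C, MvPolynomial.aeval_X,
    Fin.cases_succ, Polynomial.algebraMap_eq]

theorem Tsl_preserves_hyperbolicity_general (n : ℕ)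
    (p : MvPolynomial (Fin (n + 1)) ℝ)
    (hhyp : Hyperbolic n p)
    (c : Fin n → ℝ) (s : ℝ) :
    Hyperbolic n
      (p + MvPolynomial.C s *
        (∑ i : Fin n, MvPolynomial.C (c i) * MvPolynomial.X i.succ) *
        MvPolynomial.pderiv (0 : Fin (n + 1)) p) := by
  intro u
  rw [univRestrict_add_C_mul_linearForm_mul_pderiv_zero]
  exact (hhyp u).add_C_mul_derivative _

/-- Nuij's operator `T_s^ℓ(p) = p + s·ℓ·∂p/∂t` preserves hyperbolicity
for `s ≥ 0` and any linear form `ℓ` in the variables `x₁,…,xₙ`. -/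
theorem Tsl_preserves_hyperbolicity (n d : ℕ) (hn : 1 ≤ n) (hd : 1 ≤ d)
    (p : MvPolynomial (Fin (n + 1)) ℝ)
    (hhom : p.IsHomogeneous d)
    (hmonic : MvPolynomial.eval (fun i : Fin (n + 1) => if i = 0 then (1 : ℝ) else 0) p = 1)
    (hhyp : Hyperbolic n p)
    (c : Fin n → ℝ) (s : ℝ) (hs : 0 ≤ s) :
    Hyperbolic n
      (p + MvPolynomial.C s *
        (∑ i : Fin n, MvPolynomial.C (c i) * MvPolynomial.X i.succ) *
        MvPolynomial.pderiv (0 : Fin (n + 1)) p) :=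
  Tsl_preserves_hyperbolicity_general n p hhyp c s
end

section
/- Let S be a diagonal sign matrix (diagonal entries ±1) with S ≠ ±I_d, let D be diagonal, and let R be symmetric commuting with S. Then the polynomial det(t·I_d + x·D + y·R) factors as a product of two homogeneous polynomials of positive degree; in particular it is reducible. -/
/-!
Commuting with `S = diagonal σ` forces `R i j = 0` whenever `σ i ≠ σ j`; since `D` is diagonal,
the pencil `t + x D + y R` is then block diagonal with respect to `{σ = 1}` and `{σ = -1}`.
Its determinant is the product of the two block determinants, each homogeneous of degree
the size of its block, and both blocks are nonempty because `S ≠ ±I`.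
-/

open MvPolynomial

namespace Matrix

variable {n : Type*}

theorem isHomogeneous_X_smul_map_C_apply {σ R : Type*} [CommSemiring R] (s : σ)
    (A : Matrix n n R) (i j : n) :
    (((X s : MvPolynomial σ R) • A.map (C (σ := σ))) i j).IsHomogeneous 1 := by
  simpa [mul_comm] using (isHomogeneous_C σ (A i j)).mul (isHomogeneous_X R s)

variable [DecidableEq n]

theorem apply_eq_zero_of_diagonal_mul_eq_mul_diagonal {α : Type*} [Fintype n] [CommRing α]
    [NoZeroDivisors α] {σ : n → α} {R : Matrix n n α}
    (hcomm : diagonal σ * R = R * diagonal σ) {i j : n}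
    (hij : σ i ≠ σ j) : R i j = 0 := by
  have hentry : σ i * R i j = R i j * σ j := by
    simpa only [diagonal_mul, mul_diagonal] using congrFun (congrFun hcomm i) j
  have hprod : (σ i - σ j) * R i j = 0 := by linear_combination hentry
  exact (mul_eq_zero.mp hprod).resolve_left (sub_ne_zero.mpr hij)

theorem smul_one_add_smul_map_add_smul_map_apply_eq_zero {R S : Type*} [Semiring R]
    [CommSemiring S] (f : R →+* S) (t x y : S) {A B : Matrix n n R} {i j : n} (hij : i ≠ j)
    (hA : A i j = 0) (hB : B i j = 0) :
    (t • (1 : Matrix n n S) + x • A.map f + y • B.map f) i j = 0 := by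
  simp [one_apply_ne hij, hA, hB]

theorem isHomogeneous_det_of_forall_isHomogeneous [Fintype n] {σ R : Type*} [CommRing R]
    {M : Matrix n n (MvPolynomial σ R)} {k : ℕ} (h : ∀ i j, (M i j).IsHomogeneous k) :
    M.det.IsHomogeneous (Fintype.card n * k) := by
  rw [det_apply]
  refine IsHomogeneous.sum _ _ _ fun τ _ => ?_
  have hprod : (∏ i, M (τ i) i).IsHomogeneous (Fintype.card n * k) := by
    simpa using IsHomogeneous.prod Finset.univ (fun i => M (τ i) i) (fun _ => k)
      fun i _ => h _ _
  rcases Int.units_eq_one_or (Equiv.Perm.sign τ) with hs | hs <;> simp [hs, hprod, hprod.neg]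

end Matrix

open Matrix

theorem det_pencil_reducible_general (d : ℕ)
    (σ : Fin d → ℂ) (hσ : ∀ i, σ i = 1 ∨ σ i = -1)
    (hS1 : Matrix.diagonal σ ≠ (1 : Matrix (Fin d) (Fin d) ℂ))
    (hS2 : Matrix.diagonal σ ≠ (-1 : Matrix (Fin d) (Fin d) ℂ))
    (D R : Matrix (Fin d) (Fin d) ℂ) (hD : D.IsDiag)
    (hcomm : Matrix.diagonal σ * R = R * Matrix.diagonal σ) :
    ∃ (f g : MvPolynomial (Fin 3) ℂ) (a b : ℕ), 0 < a ∧ 0 < b ∧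
      f.IsHomogeneous a ∧ g.IsHomogeneous b ∧
      Matrix.det
        ((X 0 : MvPolynomial (Fin 3) ℂ) • (1 : Matrix (Fin d) (Fin d) (MvPolynomial (Fin 3) ℂ)) +
          (X 1 : MvPolynomial (Fin 3) ℂ) • D.map C +
          (X 2 : MvPolynomial (Fin 3) ℂ) • R.map C) = f * g := by
  set M := (X 0 : MvPolynomial (Fin 3) ℂ) •
    (1 : Matrix (Fin d) (Fin d) (MvPolynomial (Fin 3) ℂ)) +
    (X 1 : MvPolynomial (Fin 3) ℂ) • D.map C + (X 2 : MvPolynomial (Fin 3) ℂ) • R.map C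
  have hblock : ∀ i, ¬σ i = 1 → ∀ j, σ j = 1 → M i j = 0 := fun i hi j hj =>
    have hij : σ i ≠ σ j := hj ▸ hi
    smul_one_add_smul_map_add_smul_map_apply_eq_zero C _ _ _ (fun h => hij (h ▸ rfl))
      (hD fun h => hij (h ▸ rfl)) (apply_eq_zero_of_diagonal_mul_eq_mul_diagonal hcomm hij)
  have hentries : ∀ i j, (M i j).IsHomogeneous 1 := fun i j => by
    have h1 := isHomogeneous_X_smul_map_C_apply (0 : Fin 3) (1 : Matrix (Fin d) (Fin d) ℂ) i j
    rw [Matrix.map_one _ C.map_zero C.map_one] at h1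
    exact (h1.add (isHomogeneous_X_smul_map_C_apply 1 D i j)).add
      (isHomogeneous_X_smul_map_C_apply 2 R i j)
  obtain ⟨i₁, hi₁⟩ : ∃ i, σ i = 1 := by
    by_contra! h
    refine hS2 ?_
    rw [← diagonal_one, diagonal_neg]
    exact congrArg diagonal (funext fun i => (hσ i).resolve_left (h i))
  obtain ⟨i₂, hi₂⟩ : ∃ i, ¬σ i = 1 := by
    by_contra! h
    exact hS1 (by rw [← diagonal_one]; exact congrArg diagonal (funext h))
  refine ⟨_, _, Fintype.card {i // σ i = 1} * 1, Fintype.card {i // ¬σ i = 1} * 1,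
    by simpa using Fintype.card_pos_iff.mpr ⟨(⟨i₁, hi₁⟩ : {i // σ i = 1})⟩,
    by simpa using Fintype.card_pos_iff.mpr ⟨(⟨i₂, hi₂⟩ : {i // ¬σ i = 1})⟩,
    isHomogeneous_det_of_forall_isHomogeneous fun i j => hentries i j,
    isHomogeneous_det_of_forall_isHomogeneous fun i j => hentries i j,
    twoBlockTriangular_det M (fun i => σ i = 1) hblock⟩

/-- if a diagonal sign matrix `S ≠ ±I` commutes with the symmetric
matrix `R`, and `D` is diagonal, then `det(t·I + x·D + y·R)` factors into two
homogeneous polynomials of positive degree; in particular it is reducible. -/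
theorem det_pencil_reducible (d : ℕ) (hd : 2 ≤ d)
    (σ : Fin d → ℂ) (hσ : ∀ i, σ i = 1 ∨ σ i = -1)
    (hS1 : Matrix.diagonal σ ≠ (1 : Matrix (Fin d) (Fin d) ℂ))
    (hS2 : Matrix.diagonal σ ≠ (-1 : Matrix (Fin d) (Fin d) ℂ))
    (D R : Matrix (Fin d) (Fin d) ℂ) (hD : D.IsDiag) (hR : R.IsSymm)
    (hcomm : Matrix.diagonal σ * R = R * Matrix.diagonal σ) :
    ∃ (f g : MvPolynomial (Fin 3) ℂ) (a b : ℕ), 0 < a ∧ 0 < b ∧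
      f.IsHomogeneous a ∧ g.IsHomogeneous b ∧
      Matrix.det
        ((X 0 : MvPolynomial (Fin 3) ℂ) • (1 : Matrix (Fin d) (Fin d) (MvPolynomial (Fin 3) ℂ)) +
          (X 1 : MvPolynomial (Fin 3) ℂ) • D.map C +
          (X 2 : MvPolynomial (Fin 3) ℂ) • R.map C) = f * g :=
  det_pencil_reducible_general d σ hσ hS1 hS2 D R hD hcomm
end

section
/- Let D = Diag(d₁,d₂) and R = [[r₁₁,r₁₂],[r₁₂,r₂₂]] be real 2×2 matrices with D diagonal and R symmetric. Write the ternary quadric N_s(Φ(D,R)) obtained from det(tI₂+xD+yR) by the Nuij operator. Then 4 times the discriminant of this quadric equals 2s²(s-1)²(d₁-d₂)² + 2s²(s-1)²(r₁₁-r₂₂)² + s⁴r₁₂²(d₁-d₂)² + 8r₁₂²s²(1-s)² + 16(s-1)⁴; consequently, for s ∈ [0,1) the discriminant is strictly positive, so the quadric N_s(Φ(D,R)) is irreducible (defines a smooth conic). -/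
open MvPolynomial

/- Variables in `MvPolynomial (Fin 3) ℝ`: `X 0 = t`, `X 1 = x`, `X 2 = y`. -/

/-- Nuij's basic operator `T_s^ℓ(p) = p + s·ℓ·∂p/∂t` with `ℓ = X i`. -/
noncomputable def NuijT (s : ℝ) (i : Fin 3) (p : MvPolynomial (Fin 3) ℝ) :
    MvPolynomial (Fin 3) ℝ :=
  p + C s * X i * pderiv 0 p

/-- The scaling operator `G_s(p)(t,x,y) = p(t,sx,sy)`. -/
noncomputable def Gop (s : ℝ) (p : MvPolynomial (Fin 3) ℝ) : MvPolynomial (Fin 3) ℝ :=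
  aeval (fun i : Fin 3 => if i = 0 then X 0 else C s * X i) p

/-- Nuij's operator for degree 2: `N_s = F_{1-s} ∘ G_s` with `F_s = (T_s^x)²(T_s^y)²`. -/
noncomputable def Nop (s : ℝ) (p : MvPolynomial (Fin 3) ℝ) : MvPolynomial (Fin 3) ℝ :=
  NuijT (1 - s) 1 (NuijT (1 - s) 1 (NuijT (1 - s) 2 (NuijT (1 - s) 2 (Gop s p))))

/-- The coefficients `A,B,C,D,E,F` of a ternary quadric
`q = A·x² + B·xy + C·y² + D·xt + E·yt + F·t²`. -/
noncomputable def coeffA (q : MvPolynomial (Fin 3) ℝ) : ℝ := q.coeff (Finsupp.single 1 2)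
noncomputable def coeffB (q : MvPolynomial (Fin 3) ℝ) : ℝ :=
  q.coeff (Finsupp.single 1 1 + Finsupp.single 2 1)
noncomputable def coeffC (q : MvPolynomial (Fin 3) ℝ) : ℝ := q.coeff (Finsupp.single 2 2)
noncomputable def coeffD (q : MvPolynomial (Fin 3) ℝ) : ℝ :=
  q.coeff (Finsupp.single 1 1 + Finsupp.single 0 1)
noncomputable def coeffE (q : MvPolynomial (Fin 3) ℝ) : ℝ :=
  q.coeff (Finsupp.single 2 1 + Finsupp.single 0 1)
noncomputable def coeffF (q : MvPolynomial (Fin 3) ℝ) : ℝ := q.coeff (Finsupp.single 0 2)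

/-- The discriminant of a ternary quadric. -/
noncomputable def quadricDisc (q : MvPolynomial (Fin 3) ℝ) : ℝ :=
  Matrix.det
    !![coeffA q, coeffB q / 2, coeffD q / 2;
       coeffB q / 2, coeffC q, coeffE q / 2;
       coeffD q / 2, coeffE q / 2, coeffF q]

/-!
Every operator in `N_s` maps a ternary quadric with coefficients `A, …, F` to one whose
coefficients are explicit polynomials in `A, …, F` and the parameter, so `N_s(Φ(D,R))` is a
quadric with explicit coefficients and `t²`-coefficient `1`, and the discriminant identity is an
identity of real polynomials.

For irreducibility, read `t² + L·t + Q` (with `L` linear and `Q` quadratic in `x, y`) as a monic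
quadratic in `t` over `ℝ[x, y]`. If it were reducible it would have a root `r`, and then
`(2r + L)² = L² - 4Q`: the binary form `L² - 4Q` would be a square, so its discriminant would
vanish. That discriminant is `-64` times the discriminant of the ternary quadric.
-/

noncomputable def ternaryQuadric {R : Type*} [CommSemiring R] (a b c d e f : R) :
    MvPolynomial (Fin 3) R :=
  C a * X 1 ^ 2 + C b * (X 1 * X 2) + C c * X 2 ^ 2 + C d * (X 1 * X 0) +
    C e * (X 2 * X 0) + C f * X 0 ^ 2

noncomputable def binaryQuadric {R : Type*} [CommSemiring R] (a b c : R) :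
    MvPolynomial (Fin 2) R :=
  C a * X 0 ^ 2 + C b * (X 0 * X 1) + C c * X 1 ^ 2

/-- The paper's `Φ(D, R)` for `D = Diag(d₁, d₂)` and `R = [[r₁₁, r₁₂], [r₁₂, r₂₂]]`. -/
noncomputable def detPencil (d1 d2 r11 r12 r22 : ℝ) : MvPolynomial (Fin 3) ℝ :=
  Matrix.det (!![X 0 + C d1 * X 1 + C r11 * X 2, C r12 * X 2;
    C r12 * X 2, X 0 + C d2 * X 1 + C r22 * X 2] :
      Matrix (Fin 2) (Fin 2) (MvPolynomial (Fin 3) ℝ))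

section NuijOperator

variable (k a b c d e f : ℝ)

theorem pderiv_zero_ternaryQuadric :
    pderiv 0 (ternaryQuadric a b c d e f) = C d * X 1 + C e * X 2 + 2 * C f * X 0 := by
  simp [ternaryQuadric, pderiv_X_of_ne (show (1 : Fin 3) ≠ 0 by decide),
    pderiv_X_of_ne (show (2 : Fin 3) ≠ 0 by decide)]
  ring

theorem nuijT_one_ternaryQuadric :
    NuijT k 1 (ternaryQuadric a b c d e f) =
      ternaryQuadric (a + k * d) (b + k * e) c (d + 2 * k * f) e f := by
  rw [NuijT, pderiv_zero_ternaryQuadric]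
  simp only [ternaryQuadric, map_add, map_mul, map_ofNat]
  ring

theorem nuijT_two_ternaryQuadric :
    NuijT k 2 (ternaryQuadric a b c d e f) =
      ternaryQuadric a (b + k * d) (c + k * e) d (e + 2 * k * f) f := by
  rw [NuijT, pderiv_zero_ternaryQuadric]
  simp only [ternaryQuadric, map_add, map_mul, map_ofNat]
  ring

variable (s d1 d2 r11 r12 r22 : ℝ)

theorem Gop_detPencil :
    Gop s (detPencil d1 d2 r11 r12 r22) =
      ternaryQuadric (s ^ 2 * (d1 * d2)) (s ^ 2 * (d1 * r22 + d2 * r11))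
        (s ^ 2 * (r11 * r22 - r12 ^ 2)) (s * (d1 + d2)) (s * (r11 + r22)) 1 := by
  simp [Gop, detPencil, Matrix.det_fin_two_of, ternaryQuadric]
  ring

theorem Nop_detPencil :
    Nop s (detPencil d1 d2 r11 r12 r22) =
      ternaryQuadric
        (s ^ 2 * d1 * d2 + 2 * s * (1 - s) * (d1 + d2) + 2 * (1 - s) ^ 2)
        (s ^ 2 * (d1 * r22 + d2 * r11) + 2 * s * (1 - s) * (d1 + d2 + r11 + r22) + 8 * (1 - s) ^ 2)
        (s ^ 2 * (r11 * r22 - r12 ^ 2) + 2 * s * (1 - s) * (r11 + r22) + 2 * (1 - s) ^ 2)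
        (s * (d1 + d2) + 4 * (1 - s)) (s * (r11 + r22) + 4 * (1 - s)) 1 := by
  rw [Nop, Gop_detPencil, nuijT_two_ternaryQuadric, nuijT_two_ternaryQuadric,
    nuijT_one_ternaryQuadric, nuijT_one_ternaryQuadric]
  congr 1 <;> ring

end NuijOperator

theorem quadricDisc_ternaryQuadric (a b c d e f : ℝ) :
    quadricDisc (ternaryQuadric a b c d e f) =
      a * c * f + (b * d * e - a * e ^ 2 - c * d ^ 2 - f * b ^ 2) / 4 := by
  have hX : ∀ i j : Fin 3, (X i * X j : MvPolynomial (Fin 3) ℝ) =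
      monomial (Finsupp.single i 1 + Finsupp.single j 1) 1 := fun i j => by
    rw [X, X, monomial_mul, one_mul]
  simp only [quadricDisc, coeffA, coeffB, coeffC, coeffD, coeffE, coeffF, ternaryQuadric, sq, hX,
    coeff_add, coeff_C_mul, coeff_monomial]
  simp +decide [Finsupp.ext_iff, Fin.forall_fin_succ, Matrix.det_fin_three]
  ring

theorem finSuccEquiv_ternaryQuadric {R : Type*} [CommSemiring R] (a b c d e f : R) :
    finSuccEquiv R 2 (ternaryQuadric a b c d e f) =
      Polynomial.C (C f) * Polynomial.X ^ 2 + Polynomial.C (C d * X 0 + C e * X 1) * Polynomial.X +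
        Polynomial.C (binaryQuadric a b c) := by
  have h1 : finSuccEquiv R 2 (X 1) = Polynomial.C (X 0) := finSuccEquiv_X_succ (j := 0)
  have h2 : finSuccEquiv R 2 (X 2) = Polynomial.C (X 1) := finSuccEquiv_X_succ (j := 1)
  have hC : ∀ r : R, finSuccEquiv R 2 (C r) = Polynomial.C (C r) := (finSuccEquiv R 2).commutes
  simp only [ternaryQuadric, binaryQuadric, map_add, map_mul, map_pow, h1, h2, hC,
    finSuccEquiv_X_zero]
  ring

section Irreducibility

variable {K : Type*} [CommRing K] [IsDomain K]

theorem Polynomial.discrim_eq_zero_of_sq_eq_quadratic {α β γ : K} {w : Polynomial K}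
    (h : w ^ 2 = Polynomial.C α * Polynomial.X ^ 2 + Polynomial.C β * Polynomial.X +
      Polynomial.C γ) :
    discrim α β γ = 0 := by
  have hdeg : w.natDegree ≤ 1 := by
    have := (natDegree_pow w 2).symm.trans_le (h ▸ natDegree_quadratic_le)
    omega
  set w₁ := w.coeff 1
  set w₀ := w.coeff 0
  have hsq : (Polynomial.C w₁ * Polynomial.X + Polynomial.C w₀) ^ 2 =
      Polynomial.C (w₁ ^ 2) * Polynomial.X ^ 2 + Polynomial.C (2 * w₁ * w₀) * Polynomial.X +
        Polynomial.C (w₀ ^ 2) := by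
    simp only [map_mul, map_pow, map_ofNat]
    ring
  rw [eq_X_add_C_of_natDegree_le_one hdeg, hsq] at h
  have h2 := congrArg (Polynomial.coeff · 2) h
  have h1 := congrArg (Polynomial.coeff · 1) h
  have h0 := congrArg (Polynomial.coeff · 0) h
  simp only [Polynomial.coeff_add, Polynomial.coeff_C_mul, Polynomial.coeff_X_pow,
    Polynomial.coeff_X, Polynomial.coeff_C] at h2 h1 h0
  norm_num at h2 h1 h0
  rw [discrim, ← h2, ← h1, ← h0]
  ring

theorem discrim_eq_zero_of_sq_eq_binaryQuadric {α β γ : K} {w : MvPolynomial (Fin 2) K}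
    (h : w ^ 2 = binaryQuadric α β γ) : discrim α β γ = 0 := by
  apply Polynomial.discrim_eq_zero_of_sq_eq_quadratic (w := aeval ![Polynomial.X, 1] w)
  rw [← map_pow, h]
  simp [binaryQuadric]

theorem irreducible_ternaryQuadric (a b c d e : K)
    (h : discrim (d ^ 2 - 4 * a) (2 * d * e - 4 * b) (e ^ 2 - 4 * c) ≠ 0) :
    Irreducible (ternaryQuadric a b c d e 1) := by
  set L : MvPolynomial (Fin 2) K := C d * X 0 + C e * X 1
  set P : Polynomial (MvPolynomial (Fin 2) K) :=
    Polynomial.X ^ 2 + Polynomial.C L * Polynomial.X + Polynomial.C (binaryQuadric a b c)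
  have hP : finSuccEquiv K 2 (ternaryQuadric a b c d e 1) = P := by
    rw [finSuccEquiv_ternaryQuadric, map_one, map_one, one_mul]
  have hmonic : P.Monic := by
    rw [show P = _ + _ + _ from rfl, add_assoc]
    exact Polynomial.monic_X_pow_add (Polynomial.degree_linear_le.trans_lt (by norm_num))
  have hdeg : P.natDegree = 2 := by
    rw [show P = _ + _ + _ from rfl]
    compute_degree!
  rw [← MulEquiv.irreducible_iff (finSuccEquiv K 2), hP,
    hmonic.irreducible_iff_roots_eq_zero_of_degree_le_three hdeg.ge (by omega)]
  refine Multiset.eq_zero_of_forall_notMem fun r hr => h ?_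
  have hroot : 1 * (r * r) + L * r + binaryQuadric a b c = 0 := by
    simpa [P, sq] using (Polynomial.mem_roots hmonic.ne_zero).1 hr
  apply discrim_eq_zero_of_sq_eq_binaryQuadric (w := 2 * 1 * r + L)
  rw [← discrim_eq_sq_of_quadratic_eq_zero hroot]
  simp only [discrim, binaryQuadric, L, map_sub, map_mul, map_pow, map_ofNat]
  ring

end Irreducibility

theorem irreducible_ternaryQuadric_of_quadricDisc_ne_zero {a b c d e : ℝ}
    (h : quadricDisc (ternaryQuadric a b c d e 1) ≠ 0) :
    Irreducible (ternaryQuadric a b c d e 1) := by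
  refine irreducible_ternaryQuadric a b c d e fun h' => h ?_
  rw [quadricDisc_ternaryQuadric]
  rw [discrim] at h'
  linear_combination -h' / 64

section NuijPath

variable (s d1 d2 r11 r12 r22 : ℝ)

theorem four_mul_quadricDisc_Nop_detPencil :
    4 * quadricDisc (Nop s (detPencil d1 d2 r11 r12 r22)) =
      2 * s ^ 2 * (s - 1) ^ 2 * (d1 - d2) ^ 2 + 2 * s ^ 2 * (s - 1) ^ 2 * (r11 - r22) ^ 2 +
        s ^ 4 * r12 ^ 2 * (d1 - d2) ^ 2 + 8 * r12 ^ 2 * s ^ 2 * (1 - s) ^ 2 +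
        16 * (s - 1) ^ 4 := by
  rw [Nop_detPencil, quadricDisc_ternaryQuadric]
  ring

theorem quadricDisc_Nop_detPencil_pos (hs : s ≠ 1) :
    0 < quadricDisc (Nop s (detPencil d1 d2 r11 r12 r22)) := by
  have : 0 < (s - 1) ^ 4 := Even.pow_pos (by decide) (sub_ne_zero.2 hs)
  have : 0 < 4 * quadricDisc (Nop s (detPencil d1 d2 r11 r12 r22)) := by
    rw [four_mul_quadricDisc_Nop_detPencil]
    positivity
  linarith

theorem irreducible_Nop_detPencil (hs : s ≠ 1) :
    Irreducible (Nop s (detPencil d1 d2 r11 r12 r22)) := by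
  have h := (quadricDisc_Nop_detPencil_pos s d1 d2 r11 r12 r22 hs).ne'
  rw [Nop_detPencil] at h ⊢
  exact irreducible_ternaryQuadric_of_quadricDisc_ne_zero h

end NuijPath

/-- for `D = Diag(d₁,d₂)`, `R = [[r₁₁,r₁₂],[r₁₂,r₂₂]]` and
`q = N_s(det(tI₂ + xD + yR))`, four times the discriminant of `q` equals the stated
sum of squares; consequently for `s ∈ [0,1)` the discriminant is strictly positive and
the quadric `q` is irreducible. -/
theorem Nuij_path_conic (s d1 d2 r11 r12 r22 : ℝ) :
    (4 * quadricDisc (Nop s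
        (Matrix.det
          (!![X 0 + C d1 * X 1 + C r11 * X 2, C r12 * X 2;
              C r12 * X 2, X 0 + C d2 * X 1 + C r22 * X 2] :
            Matrix (Fin 2) (Fin 2) (MvPolynomial (Fin 3) ℝ)))) =
      2 * s ^ 2 * (s - 1) ^ 2 * (d1 - d2) ^ 2 +
        2 * s ^ 2 * (s - 1) ^ 2 * (r11 - r22) ^ 2 +
        s ^ 4 * r12 ^ 2 * (d1 - d2) ^ 2 +
        8 * r12 ^ 2 * s ^ 2 * (1 - s) ^ 2 +
        16 * (s - 1) ^ 4) ∧
    (0 ≤ s → s < 1 →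
      0 < quadricDisc (Nop s
          (Matrix.det
            (!![X 0 + C d1 * X 1 + C r11 * X 2, C r12 * X 2;
                C r12 * X 2, X 0 + C d2 * X 1 + C r22 * X 2] :
              Matrix (Fin 2) (Fin 2) (MvPolynomial (Fin 3) ℝ)))) ∧
        Irreducible (Nop s
          (Matrix.det
            (!![X 0 + C d1 * X 1 + C r11 * X 2, C r12 * X 2;
                C r12 * X 2, X 0 + C d2 * X 1 + C r22 * X 2] :
              Matrix (Fin 2) (Fin 2) (MvPolynomial (Fin 3) ℝ))))) := by
  exact ⟨four_mul_quadricDisc_Nop_detPencil s d1 d2 r11 r12 r22, fun _ hs =>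
    ⟨quadricDisc_Nop_detPencil_pos s d1 d2 r11 r12 r22 hs.ne,
      irreducible_Nop_detPencil s d1 d2 r11 r12 r22 hs.ne⟩⟩
end

section
/- Let p be a monic real univariate polynomial of degree d all of whose roots are real, and let s ≥ 0. Then all roots of p + s·p' are real. Moreover, if s > 0 and the roots of p are distinct, the roots of p + s·p' are distinct. -/
/-!
For `z ∉ ℝ` we have `p(z) ≠ 0` and `p'(z) / p(z) = ∑ 1 / (z - r)` over the real roots `r` of `p`;
every term lies in the open half-plane opposite to `z`, so `p(z) + s p'(z) = p(z) (1 + s ∑ 1 / (z - r))`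
cannot vanish. Hence `q = p + s p'` splits over `ℝ`. A double root `t` of `q` satisfies
`p = -s p'` and `p' = -s p''` at `t`, so `s (p'² - p p'')(t) = 0`. But for `p = ∏ (X - r)` with
distinct real `r`, the identity `W((X - r) Q) = Q² + (X - r)² W(Q)` for `W(f) = f'² - f f''`
shows that `W` is positive on all of `ℝ`.
-/

open Polynomial

namespace Complex

theorem im_mul_im_sum_one_div_sub_ofReal_neg {R : Multiset ℝ} (hR : R ≠ 0) {z : ℂ}
    (hz : z.im ≠ 0) : z.im * (R.map fun r : ℝ ↦ 1 / (z - r)).sum.im < 0 := by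
  rw [show ∀ s : Multiset ℂ, s.sum.im = (s.map im).sum from map_multiset_sum imAddGroupHom,
    Multiset.map_map, ← Multiset.sum_map_mul_left]
  have hterm : ∀ r ∈ R, z.im * (1 / (z - r)).im < 0 := by
    intro r _
    have hzr : z - r ≠ 0 := fun h ↦ hz (by simpa using congrArg im h)
    rw [one_div, inv_im, sub_im, ofReal_im, sub_zero, mul_div_assoc', mul_neg]
    exact div_neg_of_neg_of_pos (neg_neg_of_pos (mul_self_pos.2 hz)) (normSq_pos.2 hzr)
  simpa using Multiset.sum_lt_sum_of_nonempty hR hterm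

end Complex

namespace Polynomial

section Wronskian

variable {K : Type*} [CommRing K]

theorem wronskian_derivative_X_sub_C_mul (r : K) (q : K[X]) :
    wronskian (derivative ((X - C r) * q)) ((X - C r) * q) =
      q ^ 2 + (X - C r) ^ 2 * wronskian (derivative q) q := by
  simp only [wronskian, derivative_mul, derivative_add, derivative_sub, derivative_X,
    derivative_C, derivative_one, derivative_zero]
  ring

variable [LinearOrder K] [IsStrictOrderedRing K]

theorem eval_wronskian_derivative_prod_X_sub_C_nonneg (R : Multiset K) (t : K) :
    0 ≤ eval t (wronskian (derivative (R.map fun r ↦ X - C r).prod)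
      (R.map fun r ↦ X - C r).prod) := by
  induction R using Multiset.induction_on with
  | empty => simp [wronskian]
  | cons r R ih =>
    simp only [Multiset.map_cons, Multiset.prod_cons, wronskian_derivative_X_sub_C_mul,
      eval_add, eval_mul, eval_pow, eval_sub, eval_X, eval_C]
    positivity

theorem eval_wronskian_derivative_prod_X_sub_C_pos {R : Multiset K} (hR : R.Nodup)
    (hR0 : R ≠ 0) (t : K) :
    0 < eval t (wronskian (derivative (R.map fun r ↦ X - C r).prod)
      (R.map fun r ↦ X - C r).prod) := by
  induction R using Multiset.induction_on with
  | empty => exact absurd rfl hR0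
  | cons r R ih =>
    obtain ⟨hrR, hR⟩ := Multiset.nodup_cons.1 hR
    simp only [Multiset.map_cons, Multiset.prod_cons, wronskian_derivative_X_sub_C_mul,
      eval_add, eval_mul, eval_pow, eval_sub, eval_X, eval_C]
    by_cases htR : t ∈ R
    · have htr : t - r ≠ 0 := sub_ne_zero.2 fun h ↦ hrR (h ▸ htR)
      have := ih hR (ne_of_mem_of_not_mem' htR (Multiset.notMem_zero t))
      positivity
    · have hq : eval t (R.map fun r ↦ X - C r).prod ≠ 0 := by
        rw [eval_multiset_prod, Multiset.map_map]
        refine Multiset.prod_ne_zero fun h0 ↦ ?_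
        obtain ⟨r', hr', h⟩ := Multiset.mem_map.1 h0
        simp only [Function.comp_apply, eval_sub, eval_X, eval_C, sub_eq_zero] at h
        exact htR (h ▸ hr')
      have := eval_wronskian_derivative_prod_X_sub_C_nonneg R t
      positivity

end Wronskian

theorem nodup_roots_of_forall_isRoot_not_isRoot_derivative {K : Type*} [Field K] {f : K[X]}
    (hf : ∀ t, f.IsRoot t → ¬ (derivative f).IsRoot t) : f.roots.Nodup := by
  classical
  rcases eq_or_ne f 0 with rfl | hf0
  · simp
  rw [Multiset.nodup_iff_count_le_one]
  intro t
  rw [count_roots]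
  by_contra! h
  obtain ⟨ht, ht'⟩ := (one_lt_rootMultiplicity_iff_isRoot hf0).1 h
  exact hf t ht ht'

theorem nodup_roots_add_smul_derivative {K : Type*} [Field K] [LinearOrder K]
    [IsStrictOrderedRing K] {p : K[X]} (hmonic : p.Monic) (hp : p.Splits) (hnodup : p.roots.Nodup)
    (hp0 : p.roots ≠ 0) {s : K} (hs : s ≠ 0) : (p + C s * derivative p).roots.Nodup := by
  have hW : ∀ t, 0 < eval t (wronskian (derivative p) p) := by
    rw [hp.eq_prod_roots_of_monic hmonic]
    exact eval_wronskian_derivative_prod_X_sub_C_pos hnodup hp0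
  refine nodup_roots_of_forall_isRoot_not_isRoot_derivative fun t h0 h1 ↦ (hW t).ne' ?_
  simp only [IsRoot, derivative_add, derivative_mul, derivative_C, zero_mul, zero_add, eval_add,
    eval_mul, eval_C] at h0 h1
  have hsW : s * eval t (wronskian (derivative p) p) = 0 := by
    simp only [wronskian, eval_sub, eval_mul]
    linear_combination eval t (derivative p) * h0 - eval t p * h1
  exact (mul_eq_zero.1 hsW).resolve_left hs

theorem splits_of_forall_aeval_eq_zero_im_eq_zero {p : ℝ[X]}
    (hp : ∀ z : ℂ, aeval z p = 0 → z.im = 0) : p.Splits := by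
  refine (IsAlgClosed.splits _).of_splits_map (algebraMap ℝ ℂ) fun z hz ↦ ?_
  have hz_im := hp z (by rw [← eval_map_algebraMap]; exact (mem_roots'.1 hz).2)
  exact ⟨z.re, Complex.ext (by simp) (by simp [hz_im])⟩

theorem Splits.im_eq_zero_of_aeval_add_smul_derivative_eq_zero {p : ℝ[X]} (hp : p.Splits)
    (hp0 : p.roots ≠ 0) (s : ℝ) {z : ℂ} (hz : aeval z (p + C s * derivative p) = 0) :
    z.im = 0 := by
  by_contra hz_im
  set P := p.map (algebraMap ℝ ℂ)
  have hProots : P.roots = p.roots.map (algebraMap ℝ ℂ) := hp.roots_map _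
  have hPz : P.eval z ≠ 0 := by
    intro h
    have hP0 : P ≠ 0 := map_ne_zero fun h0 ↦ hp0 (by rw [h0, roots_zero])
    obtain ⟨r, -, rfl⟩ := Multiset.mem_map.1 (hProots ▸ (mem_roots hP0).2 h)
    exact hz_im (Complex.ofReal_im r)
  set S := (p.roots.map fun r : ℝ ↦ 1 / (z - r)).sum
  have hP' : (derivative P).eval z = P.eval z * S := by
    rw [(IsAlgClosed.splits P).eval_derivative_eq_eval_mul_sum hPz, hProots, Multiset.map_map]
    rfl
  have hS : 1 + (s : ℂ) * S = 0 := by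
    rw [map_add, map_mul, aeval_C, ← eval_map_algebraMap, ← eval_map_algebraMap,
      ← derivative_map, hP'] at hz
    exact (mul_eq_zero.1 (by linear_combination hz)).resolve_left hPz
  have hs : s ≠ 0 := by
    rintro rfl
    simp only [Complex.ofReal_zero, zero_mul, add_zero, one_ne_zero] at hS
  have hS_im : S.im = 0 := by
    have h := congrArg Complex.im hS
    simp only [Complex.add_im, Complex.one_im, Complex.mul_im, Complex.ofReal_re,
      Complex.ofReal_im, zero_mul, add_zero, zero_add, Complex.zero_im] at h
    exact (mul_eq_zero.1 h).resolve_left hs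
  exact (Complex.im_mul_im_sum_one_div_sub_ofReal_neg hp0 hz_im).ne (by rw [hS_im, mul_zero])

end Polynomial

theorem roots_real_add_smul_derivative_general (d : ℕ) (hd : 1 ≤ d) (p : Polynomial ℝ)
    (hmonic : p.Monic) (hdeg : p.natDegree = d)
    (hreal : ∀ z : ℂ, Polynomial.aeval z p = 0 → z.im = 0)
    (s : ℝ) :
    (∀ z : ℂ, Polynomial.aeval z (p + C s * derivative p) = 0 → z.im = 0) ∧
      (0 < s → ((p.map (algebraMap ℝ ℂ)).roots.Nodup →
        (((p + C s * derivative p).map (algebraMap ℝ ℂ)).roots.Nodup))) := by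
  have hp : p.Splits := splits_of_forall_aeval_eq_zero_im_eq_zero hreal
  have hp0 : p.roots ≠ 0 := hp.roots_ne_zero (by omega)
  have hq_real : ∀ z : ℂ, aeval z (p + C s * derivative p) = 0 → z.im = 0 :=
    fun _ ↦ hp.im_eq_zero_of_aeval_add_smul_derivative_eq_zero hp0 s
  refine ⟨hq_real, fun hs hnodup ↦ ?_⟩
  have hq : (p + C s * derivative p).Splits := splits_of_forall_aeval_eq_zero_im_eq_zero hq_real
  rw [hp.roots_map, Multiset.nodup_map_iff_of_injective (algebraMap ℝ ℂ).injective] at hnodup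
  rw [hq.roots_map, Multiset.nodup_map_iff_of_injective (algebraMap ℝ ℂ).injective]
  exact nodup_roots_add_smul_derivative hmonic hp hnodup hp0 hs.ne'

/-- if `p ∈ ℝ[t]` is monic of degree `d` with all roots real and
`s ≥ 0`, then all roots of `p + s·p'` are real; moreover if `s > 0` and the roots
of `p` are distinct, then the roots of `p + s·p'` are distinct. -/
theorem roots_real_add_smul_derivative (d : ℕ) (hd : 1 ≤ d) (p : Polynomial ℝ)
    (hmonic : p.Monic) (hdeg : p.natDegree = d)
    (hreal : ∀ z : ℂ, Polynomial.aeval z p = 0 → z.im = 0)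
    (s : ℝ) (hs : 0 ≤ s) :
    (∀ z : ℂ, Polynomial.aeval z (p + C s * derivative p) = 0 → z.im = 0) ∧
      (0 < s → ((p.map (algebraMap ℝ ℂ)).roots.Nodup →
        (((p + C s * derivative p).map (algebraMap ℝ ℂ)).roots.Nodup))) :=
  roots_real_add_smul_derivative_general d hd p hmonic hdeg hreal s
end

section
/- The polynomial p = (1/19)(19t⁴ − 31x²t² − 86y²t² + 9x⁴ + 41x²y² + 39y⁴) is hyperbolic: for every (u,v) ∈ ℝ², all roots of t ↦ p(t,u,v) are real. -/
open MvPolynomial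

/-!
With `s = t²`, `19 p(t,u,v) = 19 s² - (31u² + 86v²) s + (9u⁴ + 41u²v² + 39v⁴)` is a real quadratic
in `s` with discriminant `277u⁴ + 2216u²v² + 4432v⁴ ≥ 0`, nonpositive linear and nonnegative
constant coefficient. Hence both of its roots are real and nonnegative, and every `t` whose square
is such a root is real.
-/

namespace Complex

theorem im_eq_zero_of_sq_eq_ofReal_nonneg {z : ℂ} {r : ℝ} (hr : 0 ≤ r) (h : z ^ 2 = r) :
    z.im = 0 := by
  have hsq : z ^ 2 = ((√r : ℝ) : ℂ) ^ 2 := by rw [h, ← ofReal_pow, Real.sq_sqrt hr]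
  rcases sq_eq_sq_iff_eq_or_eq_neg.mp hsq with h | h <;> simp [h]

theorem exists_nonneg_eq_ofReal_of_quadratic_eq_zero {a b c : ℝ} (ha : 0 < a) (hb : b ≤ 0)
    (hc : 0 ≤ c) (hd : 0 ≤ discrim a b c) {w : ℂ} (hw : a * (w * w) + b * w + c = 0) :
    ∃ r : ℝ, 0 ≤ r ∧ w = r := by
  set d := discrim a b c
  -- `4ac ≥ 0` gives `√d ≤ |b|`, which makes the smaller root nonnegative as well.
  have hsqrt_le : √d ≤ -b :=
    Real.sqrt_le_iff.mpr ⟨by linarith, by nlinarith [show d = b ^ 2 - 4 * a * c from rfl]⟩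
  have hs : discrim (a : ℂ) b c = (√d : ℂ) * (√d : ℂ) := by
    rw [← ofReal_mul, Real.mul_self_sqrt hd]
    simp only [d, discrim]
    push_cast
    ring
  rcases (quadratic_eq_zero_iff (ofReal_ne_zero.mpr ha.ne') hs w).mp hw with rfl | rfl
  · exact ⟨(-b + √d) / (2 * a), div_nonneg (by linarith [Real.sqrt_nonneg d]) (by positivity),
      by push_cast; ring⟩
  · exact ⟨(-b - √d) / (2 * a), div_nonneg (by linarith) (by positivity), by push_cast; ring⟩

theorem im_eq_zero_of_biquadratic_eq_zero {a b c : ℝ} (ha : 0 < a) (hb : b ≤ 0) (hc : 0 ≤ c)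
    (hd : 0 ≤ discrim a b c) {z : ℂ} (hz : a * z ^ 4 + b * z ^ 2 + c = 0) : z.im = 0 := by
  obtain ⟨r, hr, hzr⟩ :=
    exists_nonneg_eq_ofReal_of_quadratic_eq_zero ha hb hc hd (w := z ^ 2) (by linear_combination hz)
  exact im_eq_zero_of_sq_eq_ofReal_nonneg hr hzr

end Complex

/-- the quartic
`p = (1/19)(19t⁴ − 31x²t² − 86y²t² + 9x⁴ + 41x²y² + 39y⁴)` is hyperbolic: for every
`(u,v) ∈ ℝ²` all complex roots of `t ↦ p(t,u,v)` are real. Here `X 0 = t`,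
`X 1 = x`, `X 2 = y`. -/
theorem quartic_example_hyperbolic :
    ∀ u v : ℝ, ∀ z : ℂ,
      Polynomial.aeval z
        (MvPolynomial.aeval
          (fun i : Fin 3 =>
            Fin.cases (Polynomial.X : Polynomial ℝ)
              (fun j : Fin 2 => Polynomial.C (![u, v] j)) i)
          (C (1 / 19 : ℝ) *
            (C (19 : ℝ) * X 0 ^ 4 - C (31 : ℝ) * X 1 ^ 2 * X 0 ^ 2 -
              C (86 : ℝ) * X 2 ^ 2 * X 0 ^ 2 + C (9 : ℝ) * X 1 ^ 4 +
              C (41 : ℝ) * X 1 ^ 2 * X 2 ^ 2 + C (39 : ℝ) * X 2 ^ 4))) = 0 →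
      z.im = 0 := by
  intro u v z hz
  have hpoint : (fun i : Fin 3 =>
      Fin.cases (Polynomial.X : Polynomial ℝ) (fun j : Fin 2 => Polynomial.C (![u, v] j)) i) =
      ![Polynomial.X, Polynomial.C u, Polynomial.C v] := by
    funext i
    fin_cases i <;> rfl
  rw [hpoint] at hz
  have hbiquad : ((19 : ℝ) : ℂ) * z ^ 4 + ((-(31 * u ^ 2 + 86 * v ^ 2) : ℝ) : ℂ) * z ^ 2 +
      ((9 * u ^ 4 + 41 * u ^ 2 * v ^ 2 + 39 * v ^ 4 : ℝ) : ℂ) = 0 := by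
    simp only [map_mul, map_sub, map_add, map_pow, algHom_C, Polynomial.algebraMap_eq, aeval_X,
      Matrix.cons_val_zero, Matrix.cons_val_one, Matrix.cons_val, Polynomial.aeval_C,
      Polynomial.aeval_X, Complex.coe_algebraMap] at hz
    push_cast at hz ⊢
    linear_combination 19 * hz
  have hdiscrim : discrim 19 (-(31 * u ^ 2 + 86 * v ^ 2)) (9 * u ^ 4 + 41 * u ^ 2 * v ^ 2 + 39 * v ^ 4)
      = 277 * u ^ 4 + 2216 * u ^ 2 * v ^ 2 + 4432 * v ^ 4 := by
    rw [discrim]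
    ring
  exact Complex.im_eq_zero_of_biquadratic_eq_zero (by norm_num) (by nlinarith [sq_nonneg u, sq_nonneg v])
    (by positivity) (hdiscrim ▸ by positivity) hbiquad
end

section
/- The set of strictly hyperbolic polynomials (homogeneous of degree d, monic in t, in n+1 variables) is open in the affine space of monic homogeneous polynomials of degree d with real coefficients. -/
/-!
Near a simple real root `r`, a real polynomial takes values of opposite signs at `r ± η` for all
small `η > 0`. So "`d` distinct real roots and degree `≤ d`" is witnessed by finitely many strict
sign conditions, which survive small perturbations: by the intermediate value theorem each of the
`d` disjoint intervals `(r - η, r + η)` still contains a root, and the degree bound leaves room for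
no others. Applied to `(c, v) ↦ q(·, v)`, with `c` the coefficients of a homogeneous `q`, this makes
the condition open jointly in `c` and `v`; compactness of the unit sphere makes the neighbourhood
of the coefficients of `p` uniform in `v`, and homogeneity passes from the sphere to every `v ≠ 0`.
-/

open MvPolynomial

/-- `p` is strictly hyperbolic: for every `u ≠ 0`, `t ↦ p(t,u)` has `d` distinct
real roots. -/
def StrictlyHyperbolic (n d : ℕ) (p : MvPolynomial (Fin (n + 1)) ℝ) : Prop :=
  ∀ u : Fin n → ℝ, u ≠ 0 →
    Multiset.card (univRestrict n p u).roots = d ∧ (univRestrict n p u).roots.Nodup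

open Filter Topology Set

namespace Polynomial

section CommRing

variable {R : Type*} [CommRing R] [IsDomain R]

def HasDistinctRoots (P : R[X]) (d : ℕ) : Prop :=
  Multiset.card P.roots = d ∧ P.roots.Nodup

theorem hasDistinctRoots_of_le_card_toFinset [DecidableEq R] {P : R[X]} {d : ℕ}
    (hdeg : P.natDegree ≤ d) (h : d ≤ P.roots.toFinset.card) : P.HasDistinctRoots d := by
  have := P.roots.toFinset_card_le
  have := P.card_roots'
  exact ⟨by omega, Multiset.toFinset_card_eq_card_iff_nodup.1 (by omega)⟩

end CommRing

theorem exists_mem_Ioo_eval_eq_zero {P : ℝ[X]} {a b : ℝ} (hab : a ≤ b)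
    (h : P.eval a * P.eval b < 0) : ∃ x ∈ Ioo a b, P.eval x = 0 := by
  rcases mul_neg_iff.1 h with ⟨ha, hb⟩ | ⟨ha, hb⟩
  · exact intermediate_value_Ioo' hab P.continuous.continuousOn ⟨hb, ha⟩
  · exact intermediate_value_Ioo hab P.continuous.continuousOn ⟨ha, hb⟩

theorem eventually_eval_sub_mul_eval_add_neg {P : ℝ[X]} {r : ℝ}
    (hr : P.rootMultiplicity r = 1) : ∀ᶠ η in 𝓝[>] 0, P.eval (r - η) * P.eval (r + η) < 0 := by
  have hP : P ≠ 0 := by rintro rfl; simp at hr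
  set Q := P /ₘ (X - C r)
  have hQr : Q.eval r ≠ 0 := by
    simpa [hr] using eval_divByMonic_pow_rootMultiplicity_ne_zero r hP
  have hPQ : ∀ x, P.eval x = (x - r) * Q.eval x := fun x => by
    conv_lhs => rw [← mul_divByMonic_eq_iff_isRoot.2 ((rootMultiplicity_pos hP).1 (hr ▸ one_pos))]
    simp [Q]
  have hQ : Tendsto (fun η => Q.eval (r - η) * Q.eval (r + η)) (𝓝 0)
      (𝓝 (Q.eval r * Q.eval r)) := by
    have : Continuous fun η => Q.eval (r - η) * Q.eval (r + η) := by fun_prop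
    simpa using this.tendsto 0
  filter_upwards [self_mem_nhdsWithin,
    nhdsWithin_le_nhds (hQ.eventually (lt_mem_nhds (mul_self_pos.2 hQr)))] with η (hη : 0 < η) hQη
  rw [hPQ, hPQ]
  nlinarith [mul_pos (mul_pos hη hη) hQη]

theorem exists_eval_sub_mul_eval_add_neg_of_nodup {P : ℝ[X]} (hP : P.roots.Nodup) :
    ∃ η > 0, (∀ r ∈ P.roots.toFinset, ∀ r' ∈ P.roots.toFinset, r ≠ r' → 2 * η ≤ |r - r'|) ∧
      ∀ r ∈ P.roots.toFinset, P.eval (r - η) * P.eval (r + η) < 0 := by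
  have hsep : ∀ r r' : ℝ, r ≠ r' → ∀ᶠ η in 𝓝[>] 0, 2 * η ≤ |r - r'| := fun r r' h => by
    have : Tendsto (fun η : ℝ => 2 * η) (𝓝 0) (𝓝 0) :=
      (continuous_const_mul 2).tendsto' 0 0 (mul_zero 2)
    exact nhdsWithin_le_nhds (this.eventually (ge_mem_nhds (abs_pos.2 (sub_ne_zero.2 h))))
  have hsign : ∀ r ∈ P.roots.toFinset, ∀ᶠ η in 𝓝[>] 0, P.eval (r - η) * P.eval (r + η) < 0 :=
    fun r hr => eventually_eval_sub_mul_eval_add_neg <| by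
      classical
      rw [← count_roots, Multiset.count_eq_one_of_mem hP (Multiset.mem_toFinset.1 hr)]
  exact (eventually_mem_nhdsWithin.and <|
    ((Finset.eventually_all _).2 fun r _ => (Finset.eventually_all _).2 fun r' _ =>
      eventually_imp_distrib_left.2 fun h => hsep r r' h).and
    ((Finset.eventually_all _).2 hsign)).exists

theorem hasDistinctRoots_of_eval_sub_mul_eval_add_neg {Q : ℝ[X]} {d : ℕ} (hdeg : Q.natDegree ≤ d)
    {S : Finset ℝ} (hS : d ≤ S.card) {η : ℝ} (hη : 0 ≤ η)
    (hsep : ∀ r ∈ S, ∀ r' ∈ S, r ≠ r' → 2 * η ≤ |r - r'|)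
    (hsign : ∀ r ∈ S, Q.eval (r - η) * Q.eval (r + η) < 0) : Q.HasDistinctRoots d := by
  classical
  refine hasDistinctRoots_of_le_card_toFinset hdeg (hS.trans ?_)
  have hroot : ∀ r ∈ S, ∃ x ∈ Ioo (r - η) (r + η), Q.eval x = 0 := fun r hr =>
    exists_mem_Ioo_eval_eq_zero (by linarith) (hsign r hr)
  choose! x hxI hx using hroot
  have hinj : InjOn x S := fun r hr r' hr' hxx => by
    by_contra hne
    obtain ⟨h₁, h₂⟩ := hxI r hr
    obtain ⟨h₃, h₄⟩ := hxI r' hr'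
    rw [hxx] at h₁ h₂
    cases abs_cases (r - r') <;> linarith [hsep r hr r' hr' hne]
  calc S.card = (S.image x).card := (Finset.card_image_of_injOn hinj).symm
    _ ≤ Q.roots.toFinset.card := Finset.card_le_card fun y hy => by
      obtain ⟨r, hr, rfl⟩ := Finset.mem_image.1 hy
      have hQ : Q ≠ 0 := by rintro rfl; simpa using hsign r hr
      exact Multiset.mem_toFinset.2 ((mem_roots hQ).2 (hx r hr))

theorem isOpen_setOf_hasDistinctRoots {X : Type*} [TopologicalSpace X] {F : X → ℝ[X]} {d : ℕ}
    (hF : Continuous fun z : X × ℝ => (F z.1).eval z.2) (hdeg : ∀ x, (F x).natDegree ≤ d) :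
    IsOpen {x | (F x).HasDistinctRoots d} := by
  refine isOpen_iff_mem_nhds.2 fun x₀ ⟨hcard, hnodup⟩ => ?_
  obtain ⟨η, hη, hsep, hsign⟩ := exists_eval_sub_mul_eval_add_neg_of_nodup hnodup
  have hFt : ∀ t, Continuous fun x => (F x).eval t := fun t =>
    hF.comp (continuous_id.prodMk continuous_const)
  filter_upwards [(Finset.eventually_all _).2 fun r hr =>
    ((hFt _).mul (hFt _)).continuousAt.eventually_lt continuousAt_const (hsign r hr)] with x hx
  exact hasDistinctRoots_of_eval_sub_mul_eval_add_neg (hdeg x)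
    (by rw [Multiset.toFinset_card_of_nodup hnodup, hcard]) hη.le hsep hx

end Polynomial

theorem MvPolynomial.IsHomogeneous.eval_smul {σ R : Type*} [CommSemiring R]
    {φ : MvPolynomial σ R} {d : ℕ} (hφ : φ.IsHomogeneous d) (c : R) (x : σ → R) :
    eval (c • x) φ = c ^ d * eval x φ := by
  rw [eval_eq, eval_eq, Finset.mul_sum]
  refine Finset.sum_congr rfl fun m hm => ?_
  simp only [Pi.smul_apply, smul_eq_mul, mul_pow, Finset.prod_mul_distrib,
    Finset.prod_pow_eq_pow_sum, ← hφ.degree_eq_sum_deg_support hm]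
  ring

section univRestrict

variable {n d : ℕ} {q : MvPolynomial (Fin (n + 1)) ℝ}

theorem eval_univRestrict (u : Fin n → ℝ) (t : ℝ) :
    (univRestrict n q u).eval t = eval (Fin.cons t u) q := by
  have : (fun i => Polynomial.aeval t (Fin.cases Polynomial.X (fun j => Polynomial.C (u j)) i))
      = (Fin.cons t u : Fin (n + 1) → ℝ) := by
    funext i; cases i using Fin.cases <;> simp
  rw [← Polynomial.coe_aeval_eq_eval, univRestrict, ← AlgHom.comp_apply, comp_aeval, this]
  rfl

theorem univRestrict_eq_map_finSuccEquiv (u : Fin n → ℝ) :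
    univRestrict n q u = (finSuccEquiv ℝ n q).map (eval u) :=
  Polynomial.funext fun t => by rw [eval_univRestrict, eval_eq_eval_mv_eval']

theorem natDegree_univRestrict_le (hq : q.IsHomogeneous d) (u : Fin n → ℝ) :
    (univRestrict n q u).natDegree ≤ d := by
  rw [univRestrict_eq_map_finSuccEquiv]
  calc _ ≤ (finSuccEquiv ℝ n q).natDegree := Polynomial.natDegree_map_le
    _ = q.degreeOf 0 := natDegree_finSuccEquiv q
    _ ≤ q.totalDegree := degreeOf_le_totalDegree q 0
    _ ≤ d := hq.totalDegree_le

theorem univRestrict_smul_comp (hq : q.IsHomogeneous d) (c : ℝ) (u : Fin n → ℝ) :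
    (univRestrict n q (c • u)).comp (Polynomial.C c * Polynomial.X) =
      Polynomial.C (c ^ d) * univRestrict n q u :=
  Polynomial.funext fun t => by
    have : (Fin.cons (c * t) (c • u) : Fin (n + 1) → ℝ) = c • Fin.cons t u := by
      ext i; cases i using Fin.cases <;> simp
    simp [eval_univRestrict, this, hq.eval_smul]

theorem Polynomial.HasDistinctRoots.univRestrict_smul (hq : q.IsHomogeneous d) {c : ℝ}
    (hc : c ≠ 0) {u : Fin n → ℝ} (h : (univRestrict n q u).HasDistinctRoots d) :
    (univRestrict n q (c • u)).HasDistinctRoots d := by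
  have hroots : (univRestrict n q (c • u)).roots = (univRestrict n q u).roots.map (c * ·) := by
    rw [← (univRestrict n q (c • u)).map_roots_comp_C_mul_X_add_C c 0 (.mk0 c hc), map_zero,
      add_zero, univRestrict_smul_comp hq, Polynomial.roots_C_mul _ (pow_ne_zero d hc)]
    simp
  rw [Polynomial.HasDistinctRoots, hroots, Multiset.card_map]
  exact ⟨h.1, h.2.map (mul_right_injective₀ hc)⟩

end univRestrict

section ofCoeffs

variable (σ : Type*) [Fintype σ] [DecidableEq σ] (d : ℕ)

abbrev degreeExponents : Finset (σ →₀ ℕ) :=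
  Finset.univ.finsuppAntidiag d

variable {σ}

/-- The sup distance on `degreeExponents σ d → ℝ` is the coefficientwise distance between
homogeneous polynomials of degree `d`. -/
noncomputable def homogeneousOfCoeffs (c : degreeExponents σ d → ℝ) : MvPolynomial σ ℝ :=
  ∑ m : degreeExponents σ d, monomial (m : σ →₀ ℕ) (c m)

theorem isHomogeneous_homogeneousOfCoeffs (c : degreeExponents σ d → ℝ) :
    (homogeneousOfCoeffs d c).IsHomogeneous d :=
  IsHomogeneous.sum _ _ _ fun m _ => isHomogeneous_monomial _ <| by
    simpa [Finsupp.degree_eq_sum] using (Finset.mem_finsuppAntidiag.1 m.2).1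

theorem homogeneousOfCoeffs_coeff {q : MvPolynomial σ ℝ} (hq : q.IsHomogeneous d) :
    homogeneousOfCoeffs d (fun m => q.coeff m) = q := by
  ext m
  simp only [homogeneousOfCoeffs, coeff_sum, coeff_monomial]
  rw [Finset.sum_coe_sort (degreeExponents σ d) fun x => if x = m then q.coeff x else 0,
    Finset.sum_ite_eq']
  split_ifs with hm
  · rfl
  · exact (hq.coeff_eq_zero (by simpa [Finsupp.degree_eq_sum] using hm)).symm

theorem continuous_eval_homogeneousOfCoeffs :
    Continuous fun z : (degreeExponents σ d → ℝ) × (σ → ℝ) =>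
      eval z.2 (homogeneousOfCoeffs d z.1) := by
  simp only [homogeneousOfCoeffs, map_sum, eval_monomial, Finsupp.prod]
  fun_prop

end ofCoeffs

theorem isOpen_setOf_hasDistinctRoots_univRestrict (n d : ℕ) :
    IsOpen {z : (degreeExponents (Fin (n + 1)) d → ℝ) × (Fin n → ℝ) |
      (univRestrict n (homogeneousOfCoeffs d z.1) z.2).HasDistinctRoots d} := by
  have hcont : Continuous fun w : ((degreeExponents (Fin (n + 1)) d → ℝ) × (Fin n → ℝ)) × ℝ =>
      (univRestrict n (homogeneousOfCoeffs d w.1.1) w.1.2).eval w.2 := by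
    exact ((continuous_eval_homogeneousOfCoeffs d).comp
      (f := fun w => (w.1.1, Fin.cons w.2 w.1.2)) (by fun_prop)).congr
      fun w => (eval_univRestrict _ _).symm
  exact Polynomial.isOpen_setOf_hasDistinctRoots hcont fun z =>
    natDegree_univRestrict_le (isHomogeneous_homogeneousOfCoeffs d z.1) z.2

theorem strictlyHyperbolic_open_general (n d : ℕ)
    (p : MvPolynomial (Fin (n + 1)) ℝ) (hhom : p.IsHomogeneous d)
    (hstrict : StrictlyHyperbolic n d p) :
    ∃ ε > (0 : ℝ), ∀ q : MvPolynomial (Fin (n + 1)) ℝ,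
      q.IsHomogeneous d →
      MvPolynomial.eval (fun i : Fin (n + 1) => if i = 0 then (1 : ℝ) else 0) q = 1 →
      (∀ m : Fin (n + 1) →₀ ℕ, |q.coeff m - p.coeff m| < ε) →
      StrictlyHyperbolic n d q := by
  have hnear : ∀ᶠ c in 𝓝 fun m => p.coeff m, ∀ v ∈ Metric.sphere (0 : Fin n → ℝ) 1,
      (univRestrict n (homogeneousOfCoeffs d c) v).HasDistinctRoots d :=
    (isCompact_sphere 0 1).eventually_forall_of_forall_eventually fun v hv =>
      (isOpen_setOf_hasDistinctRoots_univRestrict n d).mem_nhds <| by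
        rw [Set.mem_ofPred_eq, homogeneousOfCoeffs_coeff d hhom]
        exact hstrict v (ne_zero_of_mem_sphere one_ne_zero ⟨v, hv⟩)
  obtain ⟨ε, hε, hball⟩ := Metric.eventually_nhds_iff.1 hnear
  refine ⟨ε, hε, fun q hq _ hqp w hw => ?_⟩
  have hq' := hball ((dist_pi_lt_iff hε).2 fun m => by simpa [Real.dist_eq] using hqp m)
    (‖w‖⁻¹ • w) (by simp [norm_smul, hw])
  rw [homogeneousOfCoeffs_coeff d hq] at hq'
  have hw' := hq'.univRestrict_smul hq (norm_ne_zero_iff.2 hw)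
  rwa [smul_smul, mul_inv_cancel₀ (norm_ne_zero_iff.2 hw), one_smul] at hw'

/-- the set of strictly hyperbolic polynomials is open in the affine
space `F_ℝ` of homogeneous degree-`d` polynomials `p` with `p(1,0,…,0) = 1`:
every strictly hyperbolic `p ∈ F_ℝ` has a coefficientwise neighbourhood in `F_ℝ`
consisting of strictly hyperbolic polynomials. -/
theorem strictlyHyperbolic_open (n d : ℕ) (hn : 1 ≤ n) (hd : 1 ≤ d)
    (p : MvPolynomial (Fin (n + 1)) ℝ) (hhom : p.IsHomogeneous d)
    (hmonic : MvPolynomial.eval (fun i : Fin (n + 1) => if i = 0 then (1 : ℝ) else 0) p = 1)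
    (hstrict : StrictlyHyperbolic n d p) :
    ∃ ε > (0 : ℝ), ∀ q : MvPolynomial (Fin (n + 1)) ℝ,
      q.IsHomogeneous d →
      MvPolynomial.eval (fun i : Fin (n + 1) => if i = 0 then (1 : ℝ) else 0) q = 1 →
      (∀ m : Fin (n + 1) →₀ ℕ, |q.coeff m - p.coeff m| < ε) →
      StrictlyHyperbolic n d q :=
  strictlyHyperbolic_open_general n d p hhom hstrict
end
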